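/- For every environment model m, every behavior b, every strategy σ₁ ∉ strg(b), and every strategy σ₂ ∈ strg(b), there exists a state q such that V_{fix(m,b)}(σ₁, q) < V_{fix(m,b)}(σ₂, q). -/

import Mathlib

open scoped BigOperators

/-- A Markov decision process over finite state space `Q` and finite action space `A`:
transition probabilities `t`, reward function `r`, and discount factor `0 < γ < 1`. -/
structure MDP (Q A : Type*) [Fintype Q] [Fintype A] where
  /-- transition probabilities: `t q a` is a distribution over next states -/
  t : Q → A → Q → ℝ
  t_nonneg : ∀ q a q', 0 ≤ t q a q'
  t_sum : ∀ q a, (∑ q', t q a q') = 1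
  /-- reward function -/
  r : Q → A → ℝ
  /-- discount factor -/
  γ : ℝ
  γ_pos : 0 < γ
  γ_lt_one : γ < 1

/-- An environment model: an MDP with a distinguished "nothing" action `N`
labelling a zero-reward self-loop at every state. -/
structure EnvModel (Q A : Type*) [Fintype Q] [Fintype A] extends MDP Q A where
  /-- the distinguished "nothing" action -/
  N : A
  t_N : ∀ q, t q N q = 1
  r_N : ∀ q, r q N = 0

variable {Q A : Type*} [Fintype Q] [DecidableEq Q] [Fintype A] [DecidableEq A]

/-- `stepDist m σ i q q'`: the probability of being at state `q'` after `i` steps of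
following the strategy `σ` from state `q`. -/
noncomputable def stepDist (m : MDP Q A) (σ : Q → A) : ℕ → Q → Q → ℝ
  | 0 => fun q q' => if q = q' then 1 else 0
  | i + 1 => fun q q' => ∑ q'', stepDist m σ i q q'' * m.t q'' (σ q'') q'

/-- `V m σ q`: the expected total discounted reward of following strategy `σ` from
state `q`; it is the unique bounded solution of the Bellman equation
`V m σ q = r q (σ q) + γ * ∑ q', t q (σ q) q' * V m σ q'`. -/
noncomputable def V (m : MDP Q A) (σ : Q → A) (q : Q) : ℝ :=
  ∑' i : ℕ, m.γ ^ i * ∑ q', stepDist m σ i q q' * m.r q' (σ q')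

/-- `V*_m(q) = max_σ V_m(σ,q)`. -/
noncomputable def Vstar (m : MDP Q A) (q : Q) : ℝ := ⨆ σ : Q → A, V m σ q

/-- the set of optimal strategies -/
def opt (m : MDP Q A) : Set (Q → A) := {σ | ∀ q, V m σ q = Vstar m q}

/-- `Q_m(σ,q,a) = r(q,a) + γ * ∑_{q'} t(q,a)(q') * V_m(σ,q')`. -/
noncomputable def Qval (m : MDP Q A) (σ : Q → A) (q : Q) (a : A) : ℝ :=
  m.r q a + m.γ * ∑ q', m.t q a q' * V m σ q'

/-- `Q*_m(q,a) = r(q,a) + γ * ∑_{q'} t(q,a)(q') * V*_m(q')`. -/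
noncomputable def Qstar (m : MDP Q A) (q : Q) (a : A) : ℝ :=
  m.r q a + m.γ * ∑ q', m.t q a q' * Vstar m q'

/-- The set `U_m` of useless state-action pairs. -/
def Uset (m : EnvModel Q A) : Set (Q × A) :=
  {p | p.2 ≠ m.N ∧ ∀ σ : Q → A, Qval m.toMDP σ p.1 p.2 ≤ 0}

open Classical in
/-- `U(σ)`: replace `σ`'s action by the nothing action `N` at exactly those states `q`
with `⟨q, σ q⟩ ∈ U`. -/
noncomputable def applyU (m : EnvModel Q A) (U : Set (Q × A)) (σ : Q → A) : Q → A :=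
  fun q => if (q, σ q) ∈ U then m.N else σ q

/-- A contingency `κ` is consistent with `m` when it only picks states of positive
transition probability. -/
def Consistent (m : MDP Q A) (κ : Q → A → ℕ → Q) : Prop :=
  ∀ q a i, 0 < m.t q a (κ q a i)

/-- One step of the execution determined by `σ` and `κ`: the current state together
with the occurrence counts of each state-action pair so far. -/
def execStep (σ : Q → A) (κ : Q → A → ℕ → Q) :
    Q × (Q × A → ℕ) → Q × (Q × A → ℕ) :=
  fun s =>
    (κ s.1 (σ s.1) (s.2 (s.1, σ s.1)),
     fun p => if p = (s.1, σ s.1) then s.2 p + 1 else s.2 p)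

/-- the `i`-th state of the execution `m(q,κ,σ)` -/
def execState (σ : Q → A) (κ : Q → A → ℕ → Q) (q : Q) (i : ℕ) : Q :=
  ((execStep σ κ)^[i] (q, fun _ => 0)).1

/-- the execution `m(q,κ,σ) = [q₀, a₁, q₁, a₂, …]`, as the sequence of pairs
`i ↦ (q_i, a_{i+1})` (so `a_{i+1} = σ q_i`). -/
def execOf (σ : Q → A) (κ : Q → A → ℕ → Q) (q : Q) (i : ℕ) : Q × A :=
  (execState σ κ q i, σ (execState σ κ q i))

/-- the execution flattened into the alternating sequence `[q₀, a₁, q₁, a₂, …]`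
(position `2i` holds `q_i`, position `2i+1` holds `a_{i+1}`). -/
def flatExec (e : ℕ → Q × A) (j : ℕ) : Q ⊕ A :=
  if j % 2 = 0 then Sum.inl (e (j / 2)).1 else Sum.inr (e (j / 2)).2

open Classical in
/-- `active(e)`: the prefix of the alternating sequence of `e` strictly before the
first occurrence of the nothing action `N` (all of it if `N` never occurs);
positions past the cut-off are `none`. -/
noncomputable def activeSeq (N : A) (e : ℕ → Q × A) (j : ℕ) : Option (Q ⊕ A) :=
  if ∃ i, 2 * i + 1 ≤ j ∧ (e i).2 = N then none else some (flatExec e j)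

/-- `f` is a subsequence of `g` (for possibly-cut-off sequences). -/
def OptSubseq {X : Type*} (f g : ℕ → Option X) : Prop :=
  ∃ φ : ℕ → ℕ, StrictMono φ ∧ ∀ j, f j ≠ none → f j = g (φ j)

/-- `e₁` is a proper sub-execution of `e₂`: `active(e₁)` is a proper subsequence
of `active(e₂)`. -/
def ProperSubexec (N : A) (e₁ e₂ : ℕ → Q × A) : Prop :=
  OptSubseq (activeSeq N e₁) (activeSeq N e₂) ∧ activeSeq N e₁ ≠ activeSeq N e₂

/-- `σ' ≺ σ`: for every consistent contingency `κ` and state `q`, `m(q,κ,σ')` is a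
proper sub-execution of or equal to `m(q,κ,σ)`, and for at least one consistent
contingency and state it is a proper sub-execution. -/
def prec (m : EnvModel Q A) (σ' σ : Q → A) : Prop :=
  (∀ κ, Consistent m.toMDP κ → ∀ q,
      ProperSubexec m.N (execOf σ' κ q) (execOf σ κ q) ∨ execOf σ' κ q = execOf σ κ q) ∧
  (∃ κ q, Consistent m.toMDP κ ∧ ProperSubexec m.N (execOf σ' κ q) (execOf σ κ q))

/-- `opt*(m)`: optimal strategies that are non-redundant. -/
def optStar (m : EnvModel Q A) : Set (Q → A) :=
  {σ | σ ∈ opt m.toMDP ∧ ¬∃ σ' ∈ opt m.toMDP, prec m σ' σ}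

/-- A behavior `[q₀, a₁, q₁, …, a_n, q_n]`: the list of pairs `(q_i, a_{i+1})`
for `0 ≤ i < n` together with the final state `q_n`. -/
structure Behavior (Q A : Type*) where
  steps : List (Q × A)
  last : Q

/-- `strg(b)`: the strategies that could have produced the behavior `b`. -/
def strg (b : Behavior Q A) : Set (Q → A) :=
  {σ | ∀ p ∈ b.steps, σ p.1 = p.2}

/-- the behavior flattened into the alternating list `[q₀, a₁, q₁, …, a_n, q_n]` -/
def flatBehavior (b : Behavior Q A) : List (Q ⊕ A) :=
  (b.steps.flatMap fun p => [Sum.inl p.1, Sum.inr p.2]) ++ [Sum.inl b.last]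

/-- the behavior `b` is a subsequence of the execution `e` -/
def BehvSubseq (b : Behavior Q A) (e : ℕ → Q × A) : Prop :=
  ∃ φ : ℕ → ℕ, StrictMono φ ∧
    ∀ j (h : j < (flatBehavior b).length),
      (flatBehavior b).get ⟨j, h⟩ = flatExec e (φ j)

/-- `behv*(m)`: behaviors exhibited by some non-redundant optimal strategy under some
consistent contingency from some state. -/
def behvStar (m : EnvModel Q A) : Set (Behavior Q A) :=
  {b | ∃ σ ∈ optStar m, ∃ κ q, Consistent m.toMDP κ ∧ BehvSubseq b (execOf σ κ q)}

/-- the state `q_{i+1}` following the `i`-th step of the behavior `b` -/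
def nextStateOf (b : Behavior Q A) (i : ℕ) : Q :=
  if h : i + 1 < b.steps.length then (b.steps.get ⟨i + 1, h⟩).1 else b.last

/-- `b` could actually be observed: `t(q_i, a_{i+1})(q_{i+1}) > 0` for all `0 ≤ i < n`. -/
def Observable (m : MDP Q A) (b : Behavior Q A) : Prop :=
  ∀ i (h : i < b.steps.length),
    0 < m.t (b.steps.get ⟨i, h⟩).1 (b.steps.get ⟨i, h⟩).2 (nextStateOf b i)

/-- `r* = max_{q,a} |r(q,a)|` -/
noncomputable def rstar (m : MDP Q A) : ℝ := ⨆ p : Q × A, |m.r p.1 p.2|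

/-- the reward function of `fix(m,b)`, defined recursively along the behavior -/
noncomputable def fixR (ω : ℝ) : (Q → A → ℝ) → List (Q × A) → Q → A → ℝ
  | r, [] => r
  | r, s :: rest => fixR ω (fun q a => if q = s.1 ∧ a ≠ s.2 then -ω else r q a) rest

/-- `fix(m,b)`: the MDP `m` with its reward function modified so that deviating from
the actions of `b` at the states of `b` incurs the penalty `-ω`. -/
noncomputable def fixMDP (m : MDP Q A) (ω : ℝ) (b : Behavior Q A) : MDP Q A :=
  { m with r := fixR ω m.r b.steps }


section AuxStatement12

set_option linter.unusedSectionVars false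

lemma stepDist_nonneg (m : MDP Q A) (σ : Q → A) : ∀ i q q', 0 ≤ stepDist m σ i q q'
  | 0, q, q' => by simp [stepDist]; split <;> norm_num
  | i + 1, q, q' => by
      simp only [stepDist]
      exact Finset.sum_nonneg fun q'' _ =>
        mul_nonneg (stepDist_nonneg m σ i q q'') (m.t_nonneg _ _ _)

lemma stepDist_sum (m : MDP Q A) (σ : Q → A) : ∀ i q, ∑ q', stepDist m σ i q q' = 1
  | 0, q => by simp [stepDist]
  | i + 1, q => by
      simp only [stepDist]
      rw [Finset.sum_comm]
      have : ∀ q'' ∈ Finset.univ, ∑ q' : Q, stepDist m σ i q q'' * m.t q'' (σ q'') q'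
          = stepDist m σ i q q'' := by
        intro q'' _
        rw [← Finset.mul_sum, m.t_sum, mul_one]
      rw [Finset.sum_congr rfl this, stepDist_sum m σ i q]

lemma expect_le (m : MDP Q A) (σ : Q → A) (C : ℝ) (h : ∀ q, m.r q (σ q) ≤ C)
    (i : ℕ) (q : Q) : ∑ q', stepDist m σ i q q' * m.r q' (σ q') ≤ C := by
  calc ∑ q', stepDist m σ i q q' * m.r q' (σ q')
      ≤ ∑ q', stepDist m σ i q q' * C :=
        Finset.sum_le_sum fun q' _ => mul_le_mul_of_nonneg_left (h q') (stepDist_nonneg m σ i q q')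
    _ = C := by rw [← Finset.sum_mul, stepDist_sum, one_mul]

lemma expect_ge (m : MDP Q A) (σ : Q → A) (C : ℝ) (h : ∀ q, C ≤ m.r q (σ q))
    (i : ℕ) (q : Q) : C ≤ ∑ q', stepDist m σ i q q' * m.r q' (σ q') := by
  calc C = ∑ q', stepDist m σ i q q' * C := by rw [← Finset.sum_mul, stepDist_sum, one_mul]
    _ ≤ ∑ q', stepDist m σ i q q' * m.r q' (σ q') :=
        Finset.sum_le_sum fun q' _ => mul_le_mul_of_nonneg_left (h q') (stepDist_nonneg m σ i q q')

lemma summable_V (m : MDP Q A) (σ : Q → A) (q : Q) (C : ℝ)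
    (h : ∀ q a, |m.r q a| ≤ C) :
    Summable (fun i => m.γ ^ i * ∑ q', stepDist m σ i q q' * m.r q' (σ q')) := by
  have hγ0 : (0:ℝ) ≤ m.γ := le_of_lt m.γ_pos
  apply Summable.of_norm_bounded (g := fun i => m.γ ^ i * C)
    ((summable_geometric_of_lt_one hγ0 m.γ_lt_one).mul_right C)
  intro i
  rw [Real.norm_eq_abs, abs_mul, abs_pow, abs_of_nonneg hγ0]
  refine mul_le_mul_of_nonneg_left ?_ (pow_nonneg hγ0 i)
  rw [abs_le]
  exact ⟨expect_ge m σ (-C) (fun q' => neg_le_of_abs_le (h _ _)) i q,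
         expect_le m σ C (fun q' => le_of_abs_le (h _ _)) i q⟩

lemma tsum_geom_mul (γ C : ℝ) (h0 : 0 ≤ γ) (h1 : γ < 1) :
    ∑' i : ℕ, γ ^ i * C = C / (1 - γ) := by
  rw [tsum_mul_right, tsum_geometric_of_lt_one h0 h1, div_eq_mul_inv, mul_comm]

lemma fixR_cases (ω : ℝ) : ∀ (steps : List (Q × A)) (r : Q → A → ℝ) (q : Q) (a : A),
    fixR ω r steps q a = r q a ∨ fixR ω r steps q a = -ω
  | [], r, q, a => Or.inl rfl
  | s :: rest, r, q, a => by
      rcases fixR_cases ω rest (fun q a => if q = s.1 ∧ a ≠ s.2 then -ω else r q a) q a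
        with h | h
      · rw [fixR, h]; split
        · exact Or.inr rfl
        · exact Or.inl rfl
      · exact Or.inr (by rw [fixR, h])

lemma fixR_match (ω : ℝ) (σ₂ : Q → A) :
    ∀ (steps : List (Q × A)) (r : Q → A → ℝ), (∀ p ∈ steps, σ₂ p.1 = p.2) →
      ∀ q, fixR ω r steps q (σ₂ q) = r q (σ₂ q)
  | [], r, _, q => rfl
  | s :: rest, r, hstrg, q => by
      rw [fixR, fixR_match ω σ₂ rest _ (fun p hp => hstrg p (List.mem_cons_of_mem s hp)) q]
      split
      · rename_i hc
        exact absurd (hc.1 ▸ hstrg s List.mem_cons_self) hc.2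
      · rfl

lemma fixR_keepNeg (ω : ℝ) (σ₂ : Q → A) :
    ∀ (steps : List (Q × A)) (r : Q → A → ℝ), (∀ p ∈ steps, σ₂ p.1 = p.2) →
      ∀ q a, a ≠ σ₂ q → r q a = -ω → fixR ω r steps q a = -ω
  | [], r, _, q, a, _, hr => hr
  | s :: rest, r, hstrg, q, a, hne, hr => by
      rw [fixR]
      refine fixR_keepNeg ω σ₂ rest _ (fun p hp => hstrg p (List.mem_cons_of_mem s hp))
        q a hne ?_
      split
      · rfl
      · exact hr

lemma fixR_dev (ω : ℝ) (σ₂ : Q → A) :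
    ∀ (steps : List (Q × A)) (r : Q → A → ℝ), (∀ p ∈ steps, σ₂ p.1 = p.2) →
      ∀ q a, (q, σ₂ q) ∈ steps → a ≠ σ₂ q → fixR ω r steps q a = -ω
  | [], _, _, _, _, hmem, _ => absurd hmem List.not_mem_nil
  | s :: rest, r, hstrg, q, a, hmem, hne => by
      have hrest : ∀ p ∈ rest, σ₂ p.1 = p.2 :=
        fun p hp => hstrg p (List.mem_cons_of_mem s hp)
      rcases List.mem_cons.mp hmem with heq | hmem'
      · rw [fixR]
        refine fixR_keepNeg ω σ₂ rest _ hrest q a hne ?_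
        rw [if_pos]
        constructor
        · exact congrArg Prod.fst heq
        · rw [← congrArg Prod.snd heq]; exact hne
      · rw [fixR]
        exact fixR_dev ω σ₂ rest _ hrest q a hmem' hne

end AuxStatement12

/-- For every `σ₁ ∉ strg(b)` and `σ₂ ∈ strg(b)` there exists a state `q`
with `V_{fix(m,b)}(σ₁, q) < V_{fix(m,b)}(σ₂, q)`. -/
theorem exists_V_fixMDP_lt
    {Q A : Type*} [Fintype Q] [DecidableEq Q] [Fintype A] [DecidableEq A]
    (m : EnvModel Q A) (b : Behavior Q A)
    (ω : ℝ) (hω : 2 * rstar m.toMDP / (1 - m.γ) < ω)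
    (σ₁ : Q → A) (hσ₁ : σ₁ ∉ strg b) (σ₂ : Q → A) (hσ₂ : σ₂ ∈ strg b) :
    ∃ q, V (fixMDP m.toMDP ω b) σ₁ q < V (fixMDP m.toMDP ω b) σ₂ q := by
  simp only [strg, Set.mem_setOf_eq, not_forall] at hσ₁
  obtain ⟨p, hp, hne⟩ := hσ₁
  have hσ₂p : σ₂ p.1 = p.2 := hσ₂ p hp
  set q₀ := p.1 with hq₀
  set m' := fixMDP m.toMDP ω b with hm'
  refine ⟨q₀, ?_⟩
  have habs : ∀ q a, |m.r q a| ≤ rstar m.toMDP := fun q a =>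
    le_ciSup (f := fun p : Q × A => |m.r p.1 p.2|) (Set.Finite.bddAbove (Set.finite_range _)) (q, a)
  have hr0 : 0 ≤ rstar m.toMDP := le_trans (abs_nonneg _) (habs p.1 p.2)
  have hγ0 : (0:ℝ) ≤ m.γ := le_of_lt m.γ_pos
  have hγ1 : (0:ℝ) < 1 - m.γ := by linarith [m.γ_lt_one]
  have hω0 : 0 < ω :=
    lt_of_le_of_lt (div_nonneg (by linarith) (le_of_lt hγ1)) hω
  -- basic facts about m'
  have hm'r : m'.r = fixR ω m.r b.steps := rfl
  have hm'γ : m'.γ = m.γ := rfl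
  have hstrg : ∀ p' ∈ b.steps, σ₂ p'.1 = p'.2 := hσ₂
  -- reward bounds for m'
  set C : ℝ := max (rstar m.toMDP) ω with hC
  have hCabs : ∀ q a, |m'.r q a| ≤ C := by
    intro q a
    rcases fixR_cases ω b.steps m.r q a with h | h
    · rw [hm'r, h]; exact le_trans (habs q a) (le_max_left _ _)
    · rw [hm'r, h, abs_neg, abs_of_pos hω0]; exact le_max_right _ _
  have hub : ∀ q a, m'.r q a ≤ rstar m.toMDP := by
    intro q a
    rcases fixR_cases ω b.steps m.r q a with h | h
    · rw [hm'r, h]; exact le_of_abs_le (habs q a)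
    · rw [hm'r, h]; linarith
  have hσ₂r : ∀ q, m'.r q (σ₂ q) = m.r q (σ₂ q) := fun q =>
    fixR_match ω σ₂ b.steps m.r hstrg q
  have hdev : m'.r q₀ (σ₁ q₀) = -ω := by
    rw [hm'r]
    refine fixR_dev ω σ₂ b.steps m.r hstrg q₀ (σ₁ q₀) ?_ ?_
    · rw [hq₀, hσ₂p]; exact hp
    · rw [hq₀, hσ₂p]; exact hne
  have hsum1 := summable_V m' σ₁ q₀ C hCabs
  have hsum2 := summable_V m' σ₂ q₀ C hCabs
  have hgeom : ∀ D : ℝ, Summable (fun i : ℕ => m.γ ^ i * D) :=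
    fun D => (summable_geometric_of_lt_one hγ0 m.γ_lt_one).mul_right D
  -- lower bound for σ₂
  have h2 : -(rstar m.toMDP) / (1 - m.γ) ≤ V m' σ₂ q₀ := by
    rw [V, ← tsum_geom_mul m.γ (-(rstar m.toMDP)) hγ0 m.γ_lt_one]
    refine Summable.tsum_le_tsum (fun i => ?_) (hgeom _) hsum2
    rw [hm'γ]
    refine mul_le_mul_of_nonneg_left ?_ (pow_nonneg hγ0 i)
    refine expect_ge m' σ₂ _ (fun q => ?_) i q₀
    rw [hσ₂r q]
    exact neg_le_of_abs_le (habs q (σ₂ q))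
  -- upper bound for σ₁
  have h1 : V m' σ₁ q₀ ≤ -ω + m.γ * (rstar m.toMDP / (1 - m.γ)) := by
    rw [V, Summable.tsum_eq_zero_add hsum1]
    have hfirst : m'.γ ^ 0 * ∑ q', stepDist m' σ₁ 0 q₀ q' * m'.r q' (σ₁ q') = -ω := by
      simp only [pow_zero, one_mul, stepDist, ite_mul, one_mul, zero_mul]
      rw [Finset.sum_ite_eq Finset.univ q₀ (fun q' => m'.r q' (σ₁ q'))]
      simp [hdev]
    rw [hfirst]
    refine add_le_add (le_refl _) ?_
    have hrest : ∀ i : ℕ,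
        m'.γ ^ (i + 1) * ∑ q', stepDist m' σ₁ (i + 1) q₀ q' * m'.r q' (σ₁ q')
          ≤ m.γ * (m.γ ^ i * rstar m.toMDP) := by
      intro i
      rw [hm'γ, pow_succ, mul_comm (m.γ ^ i) m.γ, mul_assoc]
      refine mul_le_mul_of_nonneg_left ?_ hγ0
      refine mul_le_mul_of_nonneg_left ?_ (pow_nonneg hγ0 i)
      exact expect_le m' σ₁ _ (fun q => hub q (σ₁ q)) (i + 1) q₀
    calc ∑' i : ℕ, m'.γ ^ (i + 1) * ∑ q', stepDist m' σ₁ (i + 1) q₀ q' * m'.r q' (σ₁ q')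
        ≤ ∑' i : ℕ, m.γ * (m.γ ^ i * rstar m.toMDP) := by
          refine Summable.tsum_le_tsum hrest ?_ ((hgeom _).mul_left m.γ)
          have := hsum1.comp_injective (add_right_injective 1)
          simpa [Function.comp_def, add_comm] using this
      _ = m.γ * (rstar m.toMDP / (1 - m.γ)) := by
          rw [tsum_mul_left, tsum_geom_mul _ _ hγ0 m.γ_lt_one]
  -- arithmetic
  refine lt_of_le_of_lt h1 (lt_of_lt_of_le ?_ h2)
  have hpos : 0 ≤ rstar m.toMDP / (1 - m.γ) := div_nonneg hr0 (le_of_lt hγ1)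
  have key : m.γ * (rstar m.toMDP / (1 - m.γ)) + rstar m.toMDP / (1 - m.γ) < ω := by
    have h4 : m.γ * (rstar m.toMDP / (1 - m.γ)) ≤ rstar m.toMDP / (1 - m.γ) := by
      nlinarith [m.γ_lt_one]
    have h5 : 2 * (rstar m.toMDP / (1 - m.γ)) = 2 * rstar m.toMDP / (1 - m.γ) := by ring
    linarith
  have hneg : -(rstar m.toMDP) / (1 - m.γ) = -(rstar m.toMDP / (1 - m.γ)) := by ring
  rw [hneg]
  linarith
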